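/- Gumbel-max trick: if u₁, …, u_n are independent uniform random variables on (0,1), g_i = −log(−log u_i), and p₁, …, p_n are positive reals, then the probability that index k maximizes log(p_i) + g_i equals p_k / (p₁ + ⋯ + p_n). -/

import Mathlib

/-! Given `u_k = t`, the event says `u_i < t ^ (p_i / p_k)` for every `i ≠ k`, and by independence
this has conditional probability `∏_{i ≠ k} t ^ (p_i / p_k) = t ^ (∑ p / p_k - 1)`. Integrating over
`t ∈ (0, 1)` gives `p_k / ∑ p`. -/

open MeasureTheory ProbabilityTheory Set

local notation "𝕌" => volume.restrict (Ioo (0 : ℝ) 1)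

lemma volume_restrict_Ioo_zero_one_Iio {a : ℝ} (ha : a ≤ 1) : 𝕌 (Iio a) = ENNReal.ofReal a := by
  rw [Measure.restrict_apply measurableSet_Iio, Iio_inter_Ioo, min_eq_left ha, Real.volume_Ioo,
    sub_zero]

lemma lintegral_Ioo_zero_one_rpow {s : ℝ} (hs : 0 ≤ s) :
    ∫⁻ t in Ioo 0 1, ENNReal.ofReal (t ^ s) = ENNReal.ofReal (1 / (s + 1)) := by
  have hint : IntegrableOn (fun t : ℝ => t ^ s) (Ioo 0 1) :=
    (intervalIntegral.intervalIntegrable_rpow' (by linarith)).1.mono_set Ioo_subset_Ioc_self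
  rw [← ofReal_integral_eq_lintegral_ofReal hint
    ((ae_restrict_mem measurableSet_Ioo).mono fun t ht => Real.rpow_nonneg ht.1.le s),
    ← integral_Ioc_eq_integral_Ioo, ← intervalIntegral.integral_of_le zero_le_one,
    integral_rpow (Or.inl (by linarith))]
  simp [Real.zero_rpow (by linarith : s + 1 ≠ 0)]

lemma measure_pi_setOf_forall_lt_rpow {ι : Type*} [Fintype ι] {c : ι → ℝ} (hc : ∀ i, 0 ≤ c i)
    {t : ℝ} (ht : t ∈ Ioo (0 : ℝ) 1) :
    Measure.pi (fun _ : ι => 𝕌) {y | ∀ i, y i < t ^ c i} = ENNReal.ofReal (t ^ ∑ i, c i) := by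
  have hrect : {y : ι → ℝ | ∀ i, y i < t ^ c i} = univ.pi fun i => Iio (t ^ c i) := by
    ext y; simp
  rw [hrect, Measure.pi_pi, Real.rpow_sum_of_pos ht.1,
    ENNReal.ofReal_prod_of_nonneg fun i _ => (Real.rpow_pos_of_pos ht.1 _).le]
  exact Finset.prod_congr rfl fun i _ =>
    volume_restrict_Ioo_zero_one_Iio (Real.rpow_le_one ht.1.le ht.2.le (hc i))

lemma measure_pi_setOf_succAbove_lt_rpow {m : ℕ} (k : Fin (m + 1)) {c : Fin m → ℝ}
    (hc : ∀ j, 0 ≤ c j) :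
    Measure.pi (fun _ => 𝕌) {x | ∀ j, x (k.succAbove j) < x k ^ c j}
      = ENNReal.ofReal (1 / (∑ j, c j + 1)) := by
  set S : Set (ℝ × (Fin m → ℝ)) := ⋂ j, {q | q.2 j < q.1 ^ c j}
  have hS : MeasurableSet S := .iInter fun j => measurableSet_lt (by fun_prop) (by fun_prop)
  have hpre : {x : Fin (m + 1) → ℝ | ∀ j, x (k.succAbove j) < x k ^ c j}
      = MeasurableEquiv.piFinSuccAbove (fun _ => ℝ) k ⁻¹' S := by
    ext x; simp [S, MeasurableEquiv.piFinSuccAbove_apply, Fin.removeNth]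
  rw [hpre, (measurePreserving_piFinSuccAbove (fun _ => 𝕌) k).measure_preimage
    hS.nullMeasurableSet, Measure.prod_apply hS]
  refine (setLIntegral_congr_fun measurableSet_Ioo fun t ht => ?_).trans
    (lintegral_Ioo_zero_one_rpow (Finset.sum_nonneg fun j _ => hc j))
  convert measure_pi_setOf_forall_lt_rpow hc ht using 2
  ext y; simp [S]

lemma log_add_neg_log_neg_log_lt_iff {q r a b : ℝ} (hq : 0 < q) (hr : 0 < r)
    (ha : a ∈ Ioo (0 : ℝ) 1) (hb : b ∈ Ioo (0 : ℝ) 1) :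
    Real.log q + -Real.log (-Real.log a) < Real.log r + -Real.log (-Real.log b) ↔
      a < b ^ (q / r) := by
  have hA : 0 < -Real.log a := neg_pos.2 (Real.log_neg ha.1 ha.2)
  have hB : 0 < -Real.log b := neg_pos.2 (Real.log_neg hb.1 hb.2)
  rw [← Real.log_lt_log_iff ha.1 (Real.rpow_pos_of_pos hb.1 _), Real.log_rpow hb.1,
    ← sub_eq_add_neg, ← sub_eq_add_neg, ← Real.log_div hq.ne' hA.ne',
    ← Real.log_div hr.ne' hB.ne', Real.log_lt_log_iff (div_pos hq hA) (div_pos hr hB),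
    div_lt_div_iff₀ hA hB, div_mul_eq_mul_div, lt_div_iff₀ hr]
  constructor <;> intro h <;> linarith

/-- Gumbel-max trick: with i.i.d. Uniform(0,1) variables u_i, Gumbel noises
    g_i = −log(−log u_i), and positive weights p_i, the probability that index k
    strictly maximizes log p_i + g_i equals p k / ∑ i, p i. -/
theorem gumbel_max_trick {Ω : Type*} [MeasurableSpace Ω] (P : Measure Ω)
    [IsProbabilityMeasure P] (n : ℕ) (u : Fin n → Ω → ℝ)
    (hmeas : ∀ i, Measurable (u i))
    (hlaw : ∀ i, Measure.map (u i) P = (volume.restrict (Set.Ioo (0:ℝ) 1)))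
    (hindep : iIndepFun u P)
    (p : Fin n → ℝ) (hp : ∀ i, 0 < p i) (k : Fin n) :
    P {ω | ∀ i, i ≠ k →
        Real.log (p i) + (-Real.log (-Real.log (u i ω)))
          < Real.log (p k) + (-Real.log (-Real.log (u k ω)))}
      = ENNReal.ofReal (p k / ∑ i, p i) := by
  obtain ⟨m, rfl⟩ := Nat.exists_eq_add_one_of_ne_zero k.pos.ne'
  set c : Fin m → ℝ := fun j => p (k.succAbove j) / p k
  set E : Set (Fin (m + 1) → ℝ) := {x | ∀ i, i ≠ k →
    Real.log (p i) + -Real.log (-Real.log (x i)) < Real.log (p k) + -Real.log (-Real.log (x k))}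
  have hjoint : P.map (fun ω i => u i ω) = Measure.pi fun _ => 𝕌 := by
    rw [hindep.map_fun_eq_pi_map fun i => (hmeas i).aemeasurable]
    simp only [hlaw]
  have hunif : ∀ᵐ x ∂(Measure.pi fun _ : Fin (m + 1) => 𝕌), ∀ i, x i ∈ Ioo 0 1 :=
    ae_all_iff.2 fun i => Measure.tendsto_eval_ae_ae.eventually (ae_restrict_mem measurableSet_Ioo)
  have hE : E =ᵐ[Measure.pi fun _ => 𝕌] {x | ∀ j, x (k.succAbove j) < x k ^ c j} := by
    refine Filter.eventuallyEq_set.2 ?_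
    filter_upwards [hunif] with x hx
    simp only [E, mem_ofPred_eq, k.forall_iff_succAbove, ne_eq, not_true,
      IsEmpty.forall_iff, true_and, k.succAbove_ne, not_false_eq_true, forall_const]
    exact forall_congr' fun j => log_add_neg_log_neg_log_lt_iff (hp _) (hp k) (hx _) (hx k)
  have hsum : ∑ j, c j + 1 = (∑ i, p i) / p k := by
    rw [k.sum_univ_succAbove p, add_div, div_self (hp k).ne', Finset.sum_div, add_comm]
  calc P ((fun ω i => u i ω) ⁻¹' E) = P.map (fun ω i => u i ω) E :=
        (Measure.map_apply (measurable_pi_lambda _ hmeas) (by measurability)).symm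
    _ = Measure.pi (fun _ => 𝕌) {x | ∀ j, x (k.succAbove j) < x k ^ c j} := by
        rw [hjoint, measure_congr hE]
    _ = ENNReal.ofReal (p k / ∑ i, p i) := by
        rw [measure_pi_setOf_succAbove_lt_rpow k fun j => (div_pos (hp _) (hp k)).le, hsum,
          one_div_div]
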